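/- (Hilbert's fourth problem, constant curvature +1.) Let P(x,y) = −⟨x,y⟩/(1+|x|²) on ℝⁿ × (ℝⁿ∖{0}) and consider the projectively flat spray G^i = P y^i, with N^j_i = ∂G^j/∂y^i. Let F²(x,y) = (|y|²(1+|x|²) − ⟨x,y⟩²)/(1+|x|²)². Then: (1) F² > 0 for all y ≠ 0; (2) the Ricci scalar satisfies ρ := P² − S₀P = F², where S₀P = Σ_k y^k ∂P/∂x^k; (3) d_hF² = 0, i.e. ∂F²/∂x^i = Σ_j N^j_i ∂F²/∂y^j for all i. Hence the spray is metrizable by this metric, of constant flag curvature κ = ρ/F² = 1. -/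

import Mathlib

open Real Finset

/-- Partial derivative with respect to the base coordinate `x^i`. -/
noncomputable def pdx {n : ℕ} (f : ((Fin n → ℝ) × (Fin n → ℝ)) → ℝ) (i : Fin n)
    (p : (Fin n → ℝ) × (Fin n → ℝ)) : ℝ :=
  fderiv ℝ f p (Pi.single i 1, 0)

/-- Partial derivative with respect to the fibre coordinate `y^i`. -/
noncomputable def pdy {n : ℕ} (f : ((Fin n → ℝ) × (Fin n → ℝ)) → ℝ) (i : Fin n)
    (p : (Fin n → ℝ) × (Fin n → ℝ)) : ℝ :=
  fderiv ℝ f p (0, Pi.single i 1)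

/-- Partial derivative of a function on the base with respect to `x^i`. -/
noncomputable def pdb {n : ℕ} (f : (Fin n → ℝ) → ℝ) (i : Fin n) (x : Fin n → ℝ) : ℝ :=
  fderiv ℝ f x (Pi.single i 1)

/-- Partial derivative with respect to the full coordinates `(x, y)` of `ℝ²ⁿ`,
indexed by `Fin n ⊕ Fin n` (`inl` = base directions, `inr` = fibre directions). -/
noncomputable def pdz {n : ℕ} (f : ((Fin n → ℝ) × (Fin n → ℝ)) → ℝ) (a : Fin n ⊕ Fin n)
    (p : (Fin n → ℝ) × (Fin n → ℝ)) : ℝ :=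
  match a with
  | Sum.inl i => pdx f i p
  | Sum.inr i => pdy f i p

/-- The spray vector field `S = yᵏ ∂/∂xᵏ - 2Gᵏ ∂/∂yᵏ` applied to a function. -/
noncomputable def sprayOp {n : ℕ} (G : Fin n → ((Fin n → ℝ) × (Fin n → ℝ)) → ℝ)
    (f : ((Fin n → ℝ) × (Fin n → ℝ)) → ℝ) (p : (Fin n → ℝ) × (Fin n → ℝ)) : ℝ :=
  ∑ k, (p.2 k * pdx f k p - 2 * G k p * pdy f k p)

/-- The flat spray `S₀ = yᵏ ∂/∂xᵏ` applied to a function. -/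
noncomputable def flatOp {n : ℕ} (f : ((Fin n → ℝ) × (Fin n → ℝ)) → ℝ)
    (p : (Fin n → ℝ) × (Fin n → ℝ)) : ℝ :=
  ∑ k, p.2 k * pdx f k p

/-- The coefficients `N^i_j = ∂G^i/∂y^j` of the nonlinear connection. -/
noncomputable def Ncon {n : ℕ} (G : Fin n → ((Fin n → ℝ) × (Fin n → ℝ)) → ℝ)
    (i j : Fin n) : ((Fin n → ℝ) × (Fin n → ℝ)) → ℝ :=
  fun p => pdy (G i) j p

/-- The components `R^i_j = 2 ∂G^i/∂x^j - S(N^i_j) - N^i_k N^k_j` of the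
Jacobi endomorphism. -/
noncomputable def jacobiR {n : ℕ} (G : Fin n → ((Fin n → ℝ) × (Fin n → ℝ)) → ℝ)
    (i j : Fin n) (p : (Fin n → ℝ) × (Fin n → ℝ)) : ℝ :=
  2 * pdx (G i) j p - sprayOp G (Ncon G i j) p - ∑ k, Ncon G i k p * Ncon G k j p

/-- The domain `Ω × (ℝⁿ ∖ {0})`. -/
def sprayDom {n : ℕ} (Ω : Set (Fin n → ℝ)) : Set ((Fin n → ℝ) × (Fin n → ℝ)) :=
  Ω ×ˢ {y | y ≠ 0}

/-- Squared Euclidean norm `|v|²` on `ℝⁿ`. -/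
def nsq {n : ℕ} (v : Fin n → ℝ) : ℝ := ∑ i, v i ^ 2

/-- Euclidean inner product `⟨v, w⟩` on `ℝⁿ`. -/
def dotp {n : ℕ} (v w : Fin n → ℝ) : ℝ := ∑ i, v i * w i

/-!
`F²` is the round metric of the unit sphere transported to `ℝⁿ` by central projection. All the
quantities involved are rational in the invariants `A = 1 + |x|²`, `B = ⟨x, y⟩`, `C = |y|²`,
whose derivatives along `(y, 0)` are `S₀A = 2B`, `S₀B = C`; this gives `P² − S₀P = (CA − B²)/A²`.
For a projective deformation `N^j_i = (∂P/∂y^i) y^j + P δ^j_i`, so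
`N^j_i ∂F²/∂y^j = (∂P/∂y^i) (y^j ∂F²/∂y^j) + P ∂F²/∂y^i`, and `d_hF² = 0` becomes an algebraic
identity in `A`, `B`, `C` and the coordinates of `x` and `y`.
-/

section QuotientRule

variable {E : Type*} [NormedAddCommGroup E] [NormedSpace ℝ E] {f g : E → ℝ} {p : E}

theorem fderiv_fun_div_apply (hf : DifferentiableAt ℝ f p) (hg : DifferentiableAt ℝ g p)
    (hgp : g p ≠ 0) (v : E) :
    fderiv ℝ (fun q => f q / g q) p v =
      (fderiv ℝ f p v * g p - f p * fderiv ℝ g p v) / g p ^ 2 := by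
  have hinv := (hasDerivAt_inv hgp).comp_hasFDerivAt p hg.hasFDerivAt
  have h : HasFDerivAt (fun q => f q * (g q)⁻¹) _ p := hf.hasFDerivAt.fun_mul hinv
  simp only [div_eq_mul_inv, h.fderiv, neg_smul, smul_neg, add_apply, neg_apply, smul_apply,
    smul_eq_mul]
  field_simp
  ring

end QuotientRule

section DotProduct

variable {n : ℕ} {E : Type*} [NormedAddCommGroup E] [NormedSpace ℝ E] {f g : E → Fin n → ℝ}
  {p : E}

theorem dotp_comm (v w : Fin n → ℝ) : dotp v w = dotp w v := by
  simp only [dotp, mul_comm]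

theorem nsq_eq_dotp (v : Fin n → ℝ) : nsq v = dotp v v := by
  simp only [nsq, dotp, sq]

theorem nsq_nonneg (v : Fin n → ℝ) : 0 ≤ nsq v :=
  sum_nonneg fun _ _ => sq_nonneg _

theorem nsq_pos {v : Fin n → ℝ} (hv : v ≠ 0) : 0 < nsq v := by
  obtain ⟨i, hi⟩ := Function.ne_iff.mp hv
  exact sum_pos' (fun _ _ => sq_nonneg _) ⟨i, mem_univ i, sq_pos_of_ne_zero hi⟩

theorem dotp_sq_le_nsq_mul_nsq (v w : Fin n → ℝ) : dotp v w ^ 2 ≤ nsq v * nsq w :=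
  sum_mul_sq_le_sq_mul_sq univ v w

@[simp] theorem dotp_zero_left (w : Fin n → ℝ) : dotp 0 w = 0 := by simp [dotp]
@[simp] theorem dotp_zero_right (v : Fin n → ℝ) : dotp v 0 = 0 := by simp [dotp]
@[simp] theorem dotp_single_left (i : Fin n) (w : Fin n → ℝ) : dotp (Pi.single i 1) w = w i := by
  simp [dotp, Pi.single_apply]
@[simp] theorem dotp_single_right (v : Fin n → ℝ) (i : Fin n) : dotp v (Pi.single i 1) = v i := by
  simp [dotp, Pi.single_apply]

@[fun_prop]
theorem Differentiable.dotp (hf : Differentiable ℝ f) (hg : Differentiable ℝ g) :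
    Differentiable ℝ (fun q => dotp (f q) (g q)) := by
  unfold _root_.dotp; fun_prop

@[fun_prop]
theorem Differentiable.nsq (hf : Differentiable ℝ f) : Differentiable ℝ (fun q => nsq (f q)) := by
  unfold _root_.nsq; fun_prop

theorem fderiv_dotp_apply (hf : DifferentiableAt ℝ f p) (hg : DifferentiableAt ℝ g p) (v : E) :
    fderiv ℝ (fun q => dotp (f q) (g q)) p v =
      dotp (fderiv ℝ f p v) (g p) + dotp (f p) (fderiv ℝ g p v) := by
  have h := HasFDerivAt.fun_sum (u := univ) fun i _ =>
    (hasFDerivAt_pi'.1 hf.hasFDerivAt i).fun_mul (hasFDerivAt_pi'.1 hg.hasFDerivAt i)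
  rw [show (fun q => dotp (f q) (g q)) = fun q => ∑ i, f q i * g q i from rfl, h.fderiv]
  simp [dotp, sum_add_distrib, add_comm, mul_comm]

theorem fderiv_nsq_apply (hf : DifferentiableAt ℝ f p) (v : E) :
    fderiv ℝ (fun q => nsq (f q)) p v = 2 * dotp (f p) (fderiv ℝ f p v) := by
  simp only [nsq_eq_dotp, fderiv_dotp_apply hf hf, dotp_comm (fderiv ℝ f p v)]
  ring

end DotProduct

section PartialDerivatives

variable {n : ℕ}

theorem sum_mul_pdy (f : (Fin n → ℝ) × (Fin n → ℝ) → ℝ) (p : (Fin n → ℝ) × (Fin n → ℝ))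
    (a : Fin n → ℝ) : ∑ k, a k * pdy f k p = fderiv ℝ f p (0, a) := by
  have ha : ((0 : Fin n → ℝ), a) = ∑ k, a k • ((0 : Fin n → ℝ), Pi.single k (1 : ℝ)) := by
    ext i <;> simp [Prod.fst_sum, Prod.snd_sum, Pi.single_apply]
  rw [ha, map_sum]
  simp only [map_smul, smul_eq_mul, pdy]

theorem flatOp_eq_fderiv (f : (Fin n → ℝ) × (Fin n → ℝ) → ℝ) (p : (Fin n → ℝ) × (Fin n → ℝ)) :
    flatOp f p = fderiv ℝ f p (p.2, 0) := by
  have hy : (p.2, (0 : Fin n → ℝ)) = ∑ k, p.2 k • (Pi.single k (1 : ℝ), (0 : Fin n → ℝ)) := by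
    ext i <;> simp [Prod.fst_sum, Prod.snd_sum, Pi.single_apply]
  rw [hy, map_sum]
  simp only [map_smul, smul_eq_mul, flatOp, pdx]

end PartialDerivatives

section ProjectiveSpray

variable {n : ℕ} {P : (Fin n → ℝ) × (Fin n → ℝ) → ℝ} {p : (Fin n → ℝ) × (Fin n → ℝ)}

theorem Ncon_projective (hP : DifferentiableAt ℝ P p) (i j : Fin n) :
    Ncon (fun j q => P q * q.2 j) j i p =
      pdy P i p * p.2 j + P p * (Pi.single i 1 : Fin n → ℝ) j := by
  have hj := hasFDerivAt_pi'.1 (hasFDerivAt_snd (𝕜 := ℝ) (p := p)) j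
  simp only [Ncon, pdy, (hP.hasFDerivAt.fun_mul hj).fderiv, add_apply, smul_apply,
    ContinuousLinearMap.comp_apply, ContinuousLinearMap.coe_snd', ContinuousLinearMap.proj_apply,
    smul_eq_mul]
  ring

theorem sum_Ncon_projective_mul_pdy (hP : DifferentiableAt ℝ P p)
    (f : (Fin n → ℝ) × (Fin n → ℝ) → ℝ) (i : Fin n) :
    ∑ j, Ncon (fun j q => P q * q.2 j) j i p * pdy f j p =
      pdy P i p * fderiv ℝ f p (0, p.2) + P p * pdy f i p := by
  simp only [Ncon_projective hP, add_mul, sum_add_distrib, ← sum_mul_pdy, mul_sum]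
  simp [Pi.single_apply, mul_assoc]

end ProjectiveSpray

section SphericalMetric

variable {n : ℕ}

noncomputable def sphericalProjFactor (q : (Fin n → ℝ) × (Fin n → ℝ)) : ℝ :=
  -(dotp q.1 q.2) / (1 + nsq q.1)

noncomputable def sphericalMetricSq (q : (Fin n → ℝ) × (Fin n → ℝ)) : ℝ :=
  (nsq q.2 * (1 + nsq q.1) - dotp q.1 q.2 ^ 2) / (1 + nsq q.1) ^ 2

theorem one_add_nsq_pos (x : Fin n → ℝ) : 0 < 1 + nsq x := by
  linarith [nsq_nonneg x]

theorem differentiable_sphericalProjFactor :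
    Differentiable ℝ (sphericalProjFactor (n := n)) := by
  unfold sphericalProjFactor
  simp only [div_eq_mul_inv]
  fun_prop (disch := intros; exact (one_add_nsq_pos _).ne')

variable (p v : (Fin n → ℝ) × (Fin n → ℝ))

theorem fderiv_sphericalProjFactor_apply :
    fderiv ℝ sphericalProjFactor p v =
      -(dotp v.1 p.2 + dotp p.1 v.2) / (1 + nsq p.1)
        - 2 * sphericalProjFactor p * dotp p.1 v.1 / (1 + nsq p.1) := by
  have hA := (one_add_nsq_pos p.1).ne'
  unfold sphericalProjFactor
  rw [fderiv_fun_div_apply (g := fun q : (Fin n → ℝ) × (Fin n → ℝ) => 1 + nsq q.1)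
    (by fun_prop) (by fun_prop) hA]
  simp (disch := fun_prop) only [fderiv_fun_neg, neg_apply, fderiv_dotp_apply, fderiv_fst,
    ContinuousLinearMap.coe_fst', fderiv_snd, ContinuousLinearMap.coe_snd', fderiv_const_add,
    fderiv_nsq_apply]
  field_simp

theorem fderiv_sphericalMetricSq_apply :
    fderiv ℝ sphericalMetricSq p v =
      (2 * dotp p.2 v.2 * (1 + nsq p.1) + nsq p.2 * (2 * dotp p.1 v.1)
          - 2 * dotp p.1 p.2 * (dotp v.1 p.2 + dotp p.1 v.2)) / (1 + nsq p.1) ^ 2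
        - 4 * sphericalMetricSq p * dotp p.1 v.1 / (1 + nsq p.1) := by
  have hA := (one_add_nsq_pos p.1).ne'
  unfold sphericalMetricSq
  rw [fderiv_fun_div_apply (g := fun q : (Fin n → ℝ) × (Fin n → ℝ) => (1 + nsq q.1) ^ 2)
    (by fun_prop) (by fun_prop) (pow_ne_zero 2 hA)]
  simp (disch := fun_prop) only [fderiv_fun_sub, fderiv_fun_mul, fderiv_const_add, fderiv_fun_pow,
    sub_apply, add_apply, smul_apply, smul_eq_mul, fderiv_nsq_apply, fderiv_dotp_apply, fderiv_fst,
    ContinuousLinearMap.coe_fst', fderiv_snd, ContinuousLinearMap.coe_snd']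
  field_simp
  ring

theorem sphericalMetricSq_pos (hy : p.2 ≠ 0) : 0 < sphericalMetricSq p := by
  have hCS := dotp_sq_le_nsq_mul_nsq p.1 p.2
  have hC := nsq_pos hy
  exact div_pos (by nlinarith) (pow_pos (one_add_nsq_pos p.1) 2)

theorem sphericalProjFactor_sq_sub_flatOp :
    sphericalProjFactor p ^ 2 - flatOp sphericalProjFactor p = sphericalMetricSq p := by
  have hA := (one_add_nsq_pos p.1).ne'
  rw [flatOp_eq_fderiv, fderiv_sphericalProjFactor_apply]
  simp only [dotp_zero_right, add_zero, ← nsq_eq_dotp, sphericalProjFactor, sphericalMetricSq]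
  field_simp
  ring

theorem pdx_sphericalMetricSq (i : Fin n) :
    pdx sphericalMetricSq i p =
      pdy sphericalProjFactor i p * fderiv ℝ sphericalMetricSq p (0, p.2)
        + sphericalProjFactor p * pdy sphericalMetricSq i p := by
  have hA := (one_add_nsq_pos p.1).ne'
  simp only [pdx, pdy, fderiv_sphericalProjFactor_apply, fderiv_sphericalMetricSq_apply,
    dotp_single_left, dotp_single_right, dotp_zero_left, dotp_zero_right, ← nsq_eq_dotp,
    sphericalProjFactor, sphericalMetricSq]
  field_simp
  ring

end SphericalMetric

/-- Hilbert's fourth problem, constant curvature `+1`. For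
`P(x,y) = -⟨x,y⟩/(1+|x|²)` on `ℝⁿ × (ℝⁿ∖{0})` and `G^i = P y^i`, the metric
`F²(x,y) = (|y|²(1+|x|²) - ⟨x,y⟩²)/(1+|x|²)²` is positive, satisfies
`ρ = P² - S₀P = F²`, and `d_hF² = 0`; hence the spray is metrizable by this
metric, of constant flag curvature `κ = ρ/F² = 1`. -/
theorem hilbert_fourth_positive_curvature
    (n : ℕ)
    (P Fsq : ((Fin n → ℝ) × (Fin n → ℝ)) → ℝ)
    (hP : ∀ p, P p = -(dotp p.1 p.2) / (1 + nsq p.1))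
    (hFsq : ∀ p, Fsq p =
      (nsq p.2 * (1 + nsq p.1) - dotp p.1 p.2 ^ 2) / (1 + nsq p.1) ^ 2)
    (G : Fin n → ((Fin n → ℝ) × (Fin n → ℝ)) → ℝ)
    (hGdef : ∀ i p, G i p = P p * p.2 i) :
    ∀ p : (Fin n → ℝ) × (Fin n → ℝ), p.2 ≠ 0 →
      0 < Fsq p ∧
      P p ^ 2 - flatOp P p = Fsq p ∧
      (∀ i, pdx Fsq i p = ∑ j, Ncon G j i p * pdy Fsq j p) := by
  obtain rfl : P = sphericalProjFactor := funext hP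
  obtain rfl : Fsq = sphericalMetricSq := funext hFsq
  obtain rfl : G = fun j q => sphericalProjFactor q * q.2 j := funext₂ hGdef
  intro p hy
  refine ⟨sphericalMetricSq_pos p hy, sphericalProjFactor_sq_sub_flatOp p, fun i => ?_⟩
  rw [sum_Ncon_projective_mul_pdy (differentiable_sphericalProjFactor p)]
  exact pdx_sphericalMetricSq p i
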